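/- arXiv:2002.06140 — 5 statements merged into one kernel-verified Lean document; each statement's English description precedes it below -/
import Mathlib

section
/- For integers n > m > 0 and a multi-index ν ∈ ℕ³ with |ν| = n, the quaternionic regular homogeneous polynomials satisfy the binomial identity: the sum of P_μ · P_{ν−μ} over all multi-indices μ with |μ| = m and μ < ν (componentwise μ ≤ ν, μ ≠ ν, with |μ|=m) equals binom(n,m) · P_ν. -/
open Quaternion

noncomputable section

abbrev Hq := Quaternion ℝ

/-- The quaternion units `e₁ = i`, `e₂ = j`, `e₃ = k` (with `e₀ = 1`). -/
def e : Fin 4 → Hq := ![1, ⟨0,1,0,0⟩, ⟨0,0,1,0⟩, ⟨0,0,0,1⟩]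

/-- Real coordinates of a quaternion `q = t + i x₁ + j x₂ + k x₃`. -/
def coord (q : Hq) : Fin 4 → ℝ := ![q.re, q.imI, q.imJ, q.imK]

/-- The regular variables `z_i(q) = t e_i - x_i` (here `i : Fin 3` corresponds to `i+1`). -/
def z (i : Fin 3) (q : Hq) : Hq := q.re • e i.succ - coord q i.succ • (1 : Hq)

/-- `|ν| = n₁ + n₂ + n₃` for a multi-index `ν ∈ ℕ³`. -/
def msum (ν : Fin 3 → ℕ) : ℕ := ν 0 + ν 1 + ν 2

/-- The regular homogeneous polynomial `P_ν(q)`, the symmetrized product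
`(1/n!) Σ_{(i₁,…,i_n) ∈ I_ν} z_{i₁}(q) ⋯ z_{i_n}(q)`, where the sum is over all
orderings of the multiset `{n₁·1, n₂·2, n₃·3}`. -/
def Pp (ν : Fin 3 → ℕ) (q : Hq) : Hq :=
  ((msum ν).factorial : ℝ)⁻¹ •
    ∑ f ∈ Finset.univ.filter
        (fun f : Fin (msum ν) → Fin 3 =>
          ∀ j, (Finset.univ.filter fun i => f i = j).card = ν j),
      ((List.ofFn f).map (fun i => z i q)).prod

/-! Cutting a word of length `m + k` after its first `m` letters is a bijection from the words
with content `ν` onto the pairs of words with contents `μ ≤ ν`, `ν - μ` and `|μ| = m`; the product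
of a concatenation is the product of the two products, in this order, so no commutativity is
needed. Normalising by `(m + k)! = binom(m + k, m) m! k!` gives the identity, for any family of
elements of any `ℝ`-algebra in place of `z₁, z₂, z₃`. -/

open Finset

section Words

variable {ι : Type*} [DecidableEq ι]

def content {k : ℕ} (f : Fin k → ι) (j : ι) : ℕ := #{i | f i = j}

lemma content_append {m k : ℕ} (g : Fin m → ι) (h : Fin k → ι) :
    content (Fin.append g h) = content g + content h := by
  ext j
  simp only [content, card_filter, Fin.sum_univ_add, Fin.append_left, Fin.append_right,
    Pi.add_apply]

variable [Fintype ι]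

lemma sum_content {k : ℕ} (f : Fin k → ι) : ∑ j, content f j = k := by
  simpa [content] using (card_eq_sum_card_fiberwise (f := f) (s := univ) (t := univ)
    fun _ _ => mem_univ _).symm

def wordsWithContent (k : ℕ) (ν : ι → ℕ) : Finset (Fin k → ι) :=
  {f | ∀ j, #{i | f i = j} = ν j}

lemma mem_wordsWithContent {k : ℕ} {ν : ι → ℕ} {f : Fin k → ι} :
    f ∈ wordsWithContent k ν ↔ content f = ν := by
  simp [wordsWithContent, content, funext_iff]

theorem sum_wordsWithContent_append {M : Type*} [AddCommMonoid M] {m k : ℕ} (ν : ι → ℕ)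
    (w : (Fin (m + k) → ι) → M) :
    ∑ μ ∈ (Iic ν).filter (fun μ => ∑ j, μ j = m),
      ∑ p ∈ wordsWithContent m μ ×ˢ wordsWithContent k (ν - μ), w (Fin.append p.1 p.2)
      = ∑ f ∈ wordsWithContent (m + k) ν, w f := by
  rw [sum_sigma']
  refine sum_nbij' (fun p => Fin.append p.2.1 p.2.2)
    (fun f => ⟨content ((Fin.appendEquiv m k).symm f).1, (Fin.appendEquiv m k).symm f⟩)
    ?_ ?_ ?_ ?_ fun _ _ => rfl
  · rintro ⟨μ, g, h⟩ hp
    simp only [mem_sigma, mem_filter, mem_Iic, mem_product, mem_wordsWithContent] at hp ⊢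
    obtain ⟨⟨hle, -⟩, hg, hh⟩ := hp
    rw [content_append, hg, hh, add_tsub_cancel_of_le hle]
  · intro f hf
    rw [mem_wordsWithContent] at hf
    have hsplit := content_append ((Fin.appendEquiv m k).symm f).1 ((Fin.appendEquiv m k).symm f).2
    simp only [Fin.appendEquiv_symm_apply, Fin.append_castAdd_natAdd, hf] at hsplit
    simp only [mem_sigma, mem_filter, mem_Iic, mem_product, mem_wordsWithContent,
      Fin.appendEquiv_symm_apply]
    refine ⟨⟨hsplit ▸ le_self_add, sum_content _⟩, trivial, ?_⟩
    rw [hsplit, add_tsub_cancel_left]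
  · rintro ⟨μ, g, h⟩ hp
    simp only [mem_sigma, mem_product, mem_wordsWithContent] at hp
    obtain ⟨-, rfl, -⟩ := hp
    simp
  · intro f _
    exact (Fin.appendEquiv m k).apply_symm_apply f

end Words

section SymmetrizedProduct

variable {ι R : Type*} (x : ι → R)

def wordProd [Monoid R] {k : ℕ} (f : Fin k → ι) : R := ((List.ofFn f).map x).prod

lemma wordProd_append [Monoid R] {m k : ℕ} (g : Fin m → ι) (h : Fin k → ι) :
    wordProd x (Fin.append g h) = wordProd x g * wordProd x h := by
  simp [wordProd, List.ofFn_fin_append]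

variable [Fintype ι] [DecidableEq ι] [Semiring R] [Algebra ℝ R]

def symmProd (ν : ι → ℕ) : R :=
  ((∑ j, ν j).factorial : ℝ)⁻¹ • ∑ f ∈ wordsWithContent (∑ j, ν j) ν, wordProd x f

lemma symmProd_eq {ν : ι → ℕ} {k : ℕ} (h : ∑ j, ν j = k) :
    symmProd x ν = (k.factorial : ℝ)⁻¹ • ∑ f ∈ wordsWithContent k ν, wordProd x f := by
  subst h; rfl

theorem sum_symmProd_mul_symmProd {m k : ℕ} {ν : ι → ℕ} (hν : ∑ j, ν j = m + k) :
    ∑ μ ∈ (Iic ν).filter (fun μ => ∑ j, μ j = m), symmProd x μ * symmProd x (ν - μ)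
      = ((m + k).choose m : ℝ) • symmProd x ν := by
  have hterm : ∀ μ ∈ (Iic ν).filter (fun μ => ∑ j, μ j = m),
      symmProd x μ * symmProd x (ν - μ) = ((m.factorial : ℝ)⁻¹ * (k.factorial : ℝ)⁻¹) •
        ∑ p ∈ wordsWithContent m μ ×ˢ wordsWithContent k (ν - μ),
          wordProd x (Fin.append p.1 p.2) := by
    intro μ hμ
    obtain ⟨hle, hμm⟩ := mem_filter.1 hμ
    have hrest : ∑ j, (ν - μ) j = k := by
      rw [Pi.sub_def, sum_tsub_distrib _ fun j _ => mem_Iic.1 hle j, hν, hμm,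
        add_tsub_cancel_left]
    simp only [symmProd_eq x hμm, symmProd_eq x hrest, smul_mul_smul_comm, sum_mul_sum,
      ← sum_product', wordProd_append]
  rw [sum_congr rfl hterm, ← smul_sum, sum_wordsWithContent_append, symmProd_eq x hν, smul_smul,
    Nat.cast_add_choose]
  congr 1
  field_simp

end SymmetrizedProduct

lemma Pp_eq_symmProd (ν : Fin 3 → ℕ) (q : Hq) : Pp ν q = symmProd (z · q) ν := by
  rw [symmProd_eq _ (k := msum ν) (by simp [msum, Fin.sum_univ_three])]
  simp only [Pp, wordsWithContent, wordProd]
  -- `Pp` decides its filter with `Nat.decidableForallFin`, not `Fintype.decidableForallFintype`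
  convert rfl

theorem quaternionic_binomial_identity_general (n m : ℕ) (hmn : m < n)
    (ν : Fin 3 → ℕ) (hν : msum ν = n) (q : Hq) :
    ∑ μ ∈ (Finset.Iic ν).filter (fun μ => μ ≠ ν ∧ msum μ = m),
      Pp μ q * Pp (ν - μ) q = (n.choose m : ℝ) • Pp ν q := by
  obtain ⟨k, rfl⟩ : ∃ k, n = m + k := ⟨n - m, by omega⟩
  have hsum (μ : Fin 3 → ℕ) : msum μ = ∑ j, μ j := by simp [msum, Fin.sum_univ_three]
  have hfilter : (Iic ν).filter (fun μ => μ ≠ ν ∧ msum μ = m)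
      = (Iic ν).filter (fun μ => ∑ j, μ j = m) := by
    refine filter_congr fun μ _ => ⟨fun h => hsum μ ▸ h.2, fun h => ⟨?_, hsum μ ▸ h⟩⟩
    rintro rfl
    rw [← hsum, hν] at h
    omega
  simp only [Pp_eq_symmProd, hfilter]
  exact sum_symmProd_mul_symmProd _ (by rw [← hsum, hν])

/-- Quaternionic binomial identity for the regular polynomials:
for `n > m > 0` and `|ν| = n`,
`Σ_{|μ| = m, μ < ν} P_μ(q) P_{ν-μ}(q) = binom(n,m) P_ν(q)`. -/
theorem quaternionic_binomial_identity (n m : ℕ) (hm : 0 < m) (hmn : m < n)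
    (ν : Fin 3 → ℕ) (hν : msum ν = n) (q : Hq) :
    ∑ μ ∈ (Finset.Iic ν).filter (fun μ => μ ≠ ν ∧ msum μ = m),
      Pp μ q * Pp (ν - μ) q = (n.choose m : ℝ) • Pp ν q :=
  quaternionic_binomial_identity_general n m hmn ν hν q
end
end

section
/- For every multi-index ν ∈ ℕ³ with |ν| = n, the regular homogeneous polynomial P_ν satisfies the bound |P_ν(q)| ≤ (|z₁(q)|^{n₁}/n₁!)·(|z₂(q)|^{n₂}/n₂!)·(|z₃(q)|^{n₃}/n₃!) for all q ∈ ℍ. Moreover, for q = −i x₁ − j x₂ − k x₃ with all x_i > 0, equality holds. -/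
/-
Each word in the sum defining `P_ν` is a product in which `z_j` occurs `ν_j` times, so by
submultiplicativity of the norm it has norm at most `∏ ‖z_j‖ ^ ν_j`. The words form one orbit of
`S_n` acting on positions, with stabiliser `∏ S_{ν_j}`, so there are `n! / ∏ ν_j!` of them, and the
triangle inequality gives the bound. At a purely imaginary `q` every `z_j(q)` is the real number
`x_j`, so all words are the same real number and the triangle inequality is an equality.
-/

open Quaternion

noncomputable section

open Finset Equiv MulAction
open scoped Nat

section Words

variable {α ι : Type*} [Fintype α] [DecidableEq ι]

theorem mem_orbit_domMulAct_iff {f g : α → ι} :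
    g ∈ orbit (Perm α)ᵈᵐᵃ f ↔ ∀ j, #{a | g a = j} = #{a | f a = j} := by
  constructor
  · rintro ⟨σ, rfl⟩ j
    exact card_bij (fun a _ => DomMulAct.mk.symm σ • a) (by simp [DomMulAct.smul_apply])
      (by simp) fun b hb =>
        ⟨(DomMulAct.mk.symm σ)⁻¹ • b, by simpa [DomMulAct.smul_apply] using hb, by simp⟩
  · intro h
    let ε : ∀ j, {a // g a = j} ≃ {a // f a = j} := fun j =>
      Fintype.equivOfCardEq (by simp only [Fintype.card_subtype, h j])
    exact ⟨DomMulAct.mk (ofFiberEquiv ε), funext (ofFiberEquiv_map ε)⟩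

theorem card_filter_fiber_card_eq_mul_prod_factorial [DecidableEq α] [Fintype ι] (f : α → ι) :
    #{g : α → ι | ∀ j, #{a | g a = j} = #{a | f a = j}} * ∏ j, (#{a | f a = j})!
      = (Fintype.card α)! := by
  have hstab : Nat.card (stabilizer (Perm α)ᵈᵐᵃ f) = ∏ j, (#{a | f a = j})! := by
    rw [Nat.card_congr (subtypeEquiv (q := fun g : Perm α => f ∘ g = f) DomMulAct.mk.symm
        fun _ => DomMulAct.mem_stabilizer_iff),
      Nat.card_eq_fintype_card, DomMulAct.stabilizer_card]
    simp only [Fintype.card_subtype]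
  have horbit : orbit (Perm α)ᵈᵐᵃ f
      = ↑({g : α → ι | ∀ j, #{a | g a = j} = #{a | f a = j}} : Finset _) := by
    ext g
    simp [mem_orbit_domMulAct_iff]
  rw [← hstab, ← Set.ncard_coe_finset, ← horbit, ← index_stabilizer, Subgroup.index_mul_card,
    Nat.card_congr DomMulAct.mk.symm, Nat.card_perm, Nat.card_eq_fintype_card]

variable [Fintype ι]

theorem exists_fiber_card_eq (ν : ι → ℕ) {n : ℕ} (hn : ∑ j, ν j = n) :
    ∃ f : Fin n → ι, ∀ j, #{i | f i = j} = ν j := by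
  let ε : Fin n ≃ Σ j, Fin (ν j) := Fintype.equivOfCardEq (by simp [hn])
  refine ⟨fun i => (ε i).1, fun j => ?_⟩
  rw [← Fintype.card_subtype, Fintype.card_congr ((ε.subtypeEquiv fun _ => Iff.rfl).trans
    (sigmaSubtype j)), Fintype.card_fin]

variable (ι) in
def wordsWithCounts (n : ℕ) (ν : ι → ℕ) : Finset (Fin n → ι) :=
  {f | ∀ j, #{i | f i = j} = ν j}

theorem card_wordsWithCounts_mul_prod_factorial {ν : ι → ℕ} {n : ℕ} (hn : ∑ j, ν j = n) :
    #(wordsWithCounts ι n ν) * ∏ j, (ν j)! = n ! := by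
  unfold wordsWithCounts
  obtain ⟨f, hf⟩ := exists_fiber_card_eq ν hn
  simpa only [hf, Fintype.card_fin] using card_filter_fiber_card_eq_mul_prod_factorial f

theorem card_wordsWithCounts_div_factorial {ν : ι → ℕ} {n : ℕ} (hn : ∑ j, ν j = n) :
    (#(wordsWithCounts ι n ν) : ℝ) / n ! = ∏ j, ((ν j)! : ℝ)⁻¹ := by
  rw [eq_comm, eq_div_iff (by positivity), ← card_wordsWithCounts_mul_prod_factorial hn,
    Nat.cast_mul, Nat.cast_prod, prod_inv_distrib]
  field_simp

theorem prod_comp_of_mem_wordsWithCounts {M : Type*} [CommMonoid M] {n : ℕ} {ν : ι → ℕ}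
    {f : Fin n → ι} (hf : f ∈ wordsWithCounts ι n ν) (w : ι → M) :
    ∏ i, w (f i) = ∏ j, w j ^ ν j := by
  rw [wordsWithCounts, mem_filter] at hf
  rw [← Finset.prod_fiberwise' univ f w]
  simp only [prod_const, hf.2]

end Words

section SymmetrizedProduct

variable {ι R : Type*} [Fintype ι] [DecidableEq ι] {n : ℕ} {ν : ι → ℕ}

def symmetrizedProd [Semiring R] [Module ℝ R] (n : ℕ) (ν : ι → ℕ) (x : ι → R) : R :=
  (n ! : ℝ)⁻¹ • ∑ f ∈ wordsWithCounts ι n ν, ((List.ofFn f).map x).prod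

theorem norm_prod_map_le_of_mem_wordsWithCounts [SeminormedRing R] [NormOneClass R]
    {f : Fin n → ι} (hf : f ∈ wordsWithCounts ι n ν) (x : ι → R) :
    ‖((List.ofFn f).map x).prod‖ ≤ ∏ j, ‖x j‖ ^ ν j :=
  calc ‖((List.ofFn f).map x).prod‖ ≤ (((List.ofFn f).map x).map norm).prod :=
        List.norm_prod_le _
    _ = ∏ i, ‖x (f i)‖ := by rw [List.map_map, List.map_ofFn, List.prod_ofFn]; rfl
    _ = ∏ j, ‖x j‖ ^ ν j := prod_comp_of_mem_wordsWithCounts hf fun j => ‖x j‖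

theorem norm_symmetrizedProd_le [SeminormedRing R] [NormOneClass R] [NormedSpace ℝ R]
    (hn : ∑ j, ν j = n) (x : ι → R) :
    ‖symmetrizedProd n ν x‖ ≤ ∏ j, ‖x j‖ ^ ν j / (ν j)! :=
  calc ‖symmetrizedProd n ν x‖
      ≤ (n ! : ℝ)⁻¹ * ∑ f ∈ wordsWithCounts ι n ν, ‖((List.ofFn f).map x).prod‖ := by
        rw [symmetrizedProd, norm_smul, norm_inv, RCLike.norm_natCast]
        gcongr
        exact norm_sum_le _ _
    _ ≤ (n ! : ℝ)⁻¹ * ∑ _f ∈ wordsWithCounts ι n ν, ∏ j, ‖x j‖ ^ ν j := by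
        gcongr with f hf
        exact norm_prod_map_le_of_mem_wordsWithCounts hf x
    _ = ∏ j, ‖x j‖ ^ ν j / (ν j)! := by
        rw [sum_const, nsmul_eq_mul, ← mul_assoc, inv_mul_eq_div,
          card_wordsWithCounts_div_factorial hn, ← prod_mul_distrib]
        simp only [div_eq_mul_inv, mul_comm]

theorem symmetrizedProd_algebraMap [Semiring R] [Algebra ℝ R] (hn : ∑ j, ν j = n) (r : ι → ℝ) :
    symmetrizedProd n ν (fun j => algebraMap ℝ R (r j))
      = algebraMap ℝ R (∏ j, r j ^ ν j / (ν j)!) := by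
  have hword : ∀ f ∈ wordsWithCounts ι n ν,
      ((List.ofFn f).map fun j => algebraMap ℝ R (r j)).prod
        = algebraMap ℝ R (∏ j, r j ^ ν j) := fun f hf => by
    change ((List.ofFn f).map (algebraMap ℝ R ∘ r)).prod = _
    rw [← List.map_map, ← map_list_prod, List.map_ofFn, List.prod_ofFn]
    exact congrArg _ (prod_comp_of_mem_wordsWithCounts hf r)
  rw [symmetrizedProd, sum_congr rfl hword, sum_const, ← map_nsmul, Algebra.smul_def, ← map_mul,
    nsmul_eq_mul, ← mul_assoc, inv_mul_eq_div,
    card_wordsWithCounts_div_factorial hn, ← prod_mul_distrib]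
  simp only [div_eq_mul_inv, mul_comm]

theorem norm_symmetrizedProd_algebraMap [SeminormedRing R] [NormOneClass R] [NormedAlgebra ℝ R]
    (hn : ∑ j, ν j = n) (r : ι → ℝ) :
    ‖symmetrizedProd n ν (fun j => algebraMap ℝ R (r j))‖
      = ∏ j, ‖algebraMap ℝ R (r j)‖ ^ ν j / (ν j)! := by
  simp only [symmetrizedProd_algebraMap hn, norm_algebraMap', norm_prod, norm_div, norm_pow,
    RCLike.norm_natCast]

end SymmetrizedProduct

-- The two filters agree only up to their `Decidable` instances.
theorem Pp_eq_symmetrizedProd (ν : Fin 3 → ℕ) (q : Hq) :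
    Pp ν q = symmetrizedProd (msum ν) ν (fun i => z i q) := by
  unfold Pp symmetrizedProd wordsWithCounts
  congr!

theorem z_neg_imaginary (x : Fin 3 → ℝ) (i : Fin 3) :
    z i (-(x 0 • e 1 + x 1 • e 2 + x 2 • e 3)) = algebraMap ℝ Hq (x i) := by
  -- `e` is unfolded last: simp cannot take projections of `x • ⟨…⟩` once `e` is a literal.
  fin_cases i <;> ext <;> simp [z, coord] <;> simp [e]

/-- Bound `|P_ν(q)| ≤ Π_i |z_i(q)|^{n_i}/n_i!`, with equality for
`q = -i x₁ - j x₂ - k x₃` with all `x_i > 0`. -/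
theorem Pp_norm_le_and_eq (ν : Fin 3 → ℕ) :
    (∀ q : Hq, ‖Pp ν q‖ ≤ ∏ i : Fin 3, ‖z i q‖ ^ ν i / (ν i).factorial) ∧
    (∀ x : Fin 3 → ℝ, (∀ i, 0 < x i) →
      ‖Pp ν (-(x 0 • e 1 + x 1 • e 2 + x 2 • e 3))‖
        = ∏ i : Fin 3, ‖z i (-(x 0 • e 1 + x 1 • e 2 + x 2 • e 3))‖ ^ ν i / (ν i).factorial) := by
  have hn : ∑ j, ν j = msum ν := Fin.sum_univ_three ν
  simp only [Pp_eq_symmetrizedProd]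
  refine ⟨fun q => norm_symmetrizedProd_le hn _, fun x _ => ?_⟩
  simp only [z_neg_imaginary]
  exact norm_symmetrizedProd_algebraMap hn x
end
end

section
/- A product of the pairwise-noncommuting regular variables: for any choice of indices i₁,…,i_n ∈ {1,2,3}, the function q ↦ (symmetrized product) P_ν(q) with ν the content of (i₁,…,i_n) is left-regular, i.e., ∂̄_l P_ν = 0. Consequently every P_ν (ν ∈ ℕ³) is left-regular on ℍ. -/
open Quaternion

noncomputable section

/-- The Cauchy–Riemann–Fueter operator (left version):
`∂̄_l f = (1/2)(∂f/∂t + i ∂f/∂x₁ + j ∂f/∂x₂ + k ∂f/∂x₃)`. -/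
def CRl (f : Hq → Hq) (q : Hq) : Hq :=
  (1/2 : ℝ) • (fderiv ℝ f q 1 + e 1 * fderiv ℝ f q (e 1)
    + e 2 * fderiv ℝ f q (e 2) + e 3 * fderiv ℝ f q (e 3))

/-- The Cauchy–Riemann–Fueter operator (right version):
`∂̄_r f = (1/2)(∂f/∂t + (∂f/∂x₁)i + (∂f/∂x₂)j + (∂f/∂x₃)k)`. -/
def CRr (f : Hq → Hq) (q : Hq) : Hq :=
  (1/2 : ℝ) • (fderiv ℝ f q 1 + fderiv ℝ f q (e 1) * e 1
    + fderiv ℝ f q (e 2) * e 2 + fderiv ℝ f q (e 3) * e 3)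

open scoped RightActions

/-!
By the Leibniz rule, and since `z_i(1) = e_i` and `z_i(e_j) = -δ_ij`, the Fueter operator of a
word `z_{i₁} ⋯ z_{i_n}` is `½ Σ_k [z_{i₁} ⋯ z_{i_{k-1}}, e_{i_k}] z_{i_{k+1}} ⋯ z_{i_n}`.
Expanding each commutator with `[z_i, e_m] = t [e_i, e_m]` turns it into a sum over pairs of
positions `l < k` whose terms see the letters at `l` and `k` only through `[e_{i_l}, e_{i_k}]`.
Swapping these two letters permutes the words of content `ν` and changes the sign of the term, so
the symmetrized sum `P_ν` is annihilated.
-/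

theorem List.prod_mul_sub_mul_prod {R : Type*} [Ring R] (L : List R) (x : R) :
    L.prod * x - x * L.prod =
      ∑ k : Fin L.length, (L.take k).prod * (L[k] * x - x * L[k]) * (L.drop (k + 1)).prod := by
  induction L with
  | nil => simp
  | cons a L ih =>
    refine Eq.trans ?_ (Fin.sum_univ_succ (n := L.length) _).symm
    simp only [Fin.getElem_fin, mul_assoc] at ih
    simp only [Fin.getElem_fin, Fin.val_zero, Fin.val_succ, List.prod_cons, List.take_zero,
      List.prod_nil, List.getElem_cons_zero, List.getElem_cons_succ, List.take_succ_cons,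
      List.drop_succ_cons, List.drop_zero, one_mul, mul_assoc, ← Finset.mul_sum, ← ih]
    noncomm_ring

theorem List.ofFn_comp_swap {α : Type*} {n : ℕ} (f : Fin n → α) (a b : Fin n) :
    List.ofFn (f ∘ Equiv.swap a b) = ((List.ofFn f).set a (f b)).set b (f a) := by
  apply List.ext_getElem (by simp)
  intro m h _
  simp only [List.getElem_ofFn, List.getElem_set, Function.comp_apply, Equiv.swap_apply_def]
  split_ifs <;> simp_all [Fin.ext_iff]
  rw [Fin.ext ‹(b : ℕ) = a›]

theorem Finset.card_filter_comp_perm {α β : Type*} [Fintype α] [DecidableEq β] (f : α → β)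
    (σ : Equiv.Perm α) (j : β) :
    (Finset.univ.filter fun i => f (σ i) = j).card = (Finset.univ.filter fun i => f i = j).card :=
  Finset.card_equiv σ (by simp)

theorem Finset.sum_eq_zero_of_involution_neg {ι M : Type*} [AddCommGroup M] [IsAddTorsionFree M]
    {s : Finset ι} {F : ι → M} (g : ι → ι) (hg : ∀ a ∈ s, g a ∈ s)
    (hgg : ∀ a ∈ s, g (g a) = a) (hF : ∀ a ∈ s, F (g a) = -F a) : ∑ a ∈ s, F a = 0 :=
  Finset.sum_involution (fun a _ => g a) (fun a ha => by rw [hF a ha, add_neg_cancel])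
    (fun a ha hne hfix => hne (self_eq_neg.mp (by rw [← hF a ha, hfix]))) hg hgg

instance : IsAddTorsionFree Hq := IsAddTorsionFree.of_module_rat Hq

def eComm (i m : Fin 3) : Hq := e i.succ * e m.succ - e m.succ * e i.succ

theorem eComm_swap (i m : Fin 3) : eComm m i = -eComm i m := (neg_sub _ _).symm

theorem z_mul_e_sub_e_mul_z (i m : Fin 3) (q : Hq) :
    z i q * e m.succ - e m.succ * z i q = q.re • eComm i m := by
  simp only [z, eComm, sub_mul, mul_sub, smul_mul_assoc, mul_smul_comm, one_mul, mul_one,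
    smul_sub]
  abel

def zProd (w : List (Fin 3)) (q : Hq) : Hq := (w.map (z · q)).prod

theorem zProd_mul_e_sub_e_mul_zProd (w : List (Fin 3)) (m : Fin 3) (q : Hq) :
    zProd w q * e m.succ - e m.succ * zProd w q =
      q.re • ∑ l : Fin w.length, zProd (w.take l) q * eComm w[l] m * zProd (w.drop (l + 1)) q := by
  rw [zProd, List.prod_mul_sub_mul_prod, Finset.smul_sum]
  exact Fintype.sum_equiv (finCongr (List.length_map _)) _ _ fun l => by
    simp [zProd, List.map_take, List.map_drop, z_mul_e_sub_e_mul_z]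

def zCLM (i : Fin 3) : Hq →L[ℝ] Hq :=
  LinearMap.toContinuousLinearMap
    { toFun := z i
      map_add' := by intro a b; fin_cases i <;> simp [z, coord] <;> module
      map_smul' := by intro r a; fin_cases i <;> simp [z, coord] <;> module }

theorem zCLM_apply (i : Fin 3) (q : Hq) : zCLM i q = z i q := rfl

theorem z_one (i : Fin 3) : z i 1 = e i.succ := by
  fin_cases i <;> simp [z, coord, e] <;> exact one_smul _ _

theorem z_e_succ (i j : Fin 3) : z i (e j.succ) = if i = j then -1 else 0 := by
  fin_cases i <;> fin_cases j <;> simp [z, coord, e] <;> exact zero_smul _ _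

theorem hasFDerivAt_zProd (w : List (Fin 3)) (q : Hq) :
    HasFDerivAt (zProd w)
      (∑ k : Fin w.length, zProd (w.take k) q • zCLM w[k] <• zProd (w.drop (k + 1)) q) q :=
  HasFDerivAt.list_prod' fun i _ => (zCLM i).hasFDerivAt

def fueterMap : (Hq →L[ℝ] Hq) →ₗ[ℝ] Hq where
  toFun D := D 1 + e 1 * D (e 1) + e 2 * D (e 2) + e 3 * D (e 3)
  map_add' D D' := by simp only [add_apply, mul_add]; abel
  map_smul' r D := by
    simp only [smul_apply, mul_smul_comm, smul_add, RingHom.id_apply]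

theorem CRl_eq_fueterMap (f : Hq → Hq) (q : Hq) :
    CRl f q = (1 / 2 : ℝ) • fueterMap (fderiv ℝ f q) := rfl

theorem CRl_const_smul_sum {ι : Type*} (s : Finset ι) (r : ℝ) (F : ι → Hq → Hq) (q : Hq)
    (hF : ∀ a ∈ s, DifferentiableAt ℝ (F a) q) :
    CRl (fun x => r • ∑ a ∈ s, F a x) q = r • ∑ a ∈ s, CRl (F a) q := by
  have hD : HasFDerivAt (fun x => r • ∑ a ∈ s, F a x) (r • ∑ a ∈ s, fderiv ℝ (F a) q) q :=
    (HasFDerivAt.fun_sum fun a ha => (hF a ha).hasFDerivAt).const_smul r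
  rw [CRl_eq_fueterMap, hD.fderiv, map_smul, map_sum, smul_comm, Finset.smul_sum]
  rfl

theorem fueterMap_smul_zCLM_op_smul (A B : Hq) (i : Fin 3) :
    fueterMap (A • zCLM i <• B) = (A * e i.succ - e i.succ * A) * B := by
  have h1 : e 1 = e (0 : Fin 3).succ := rfl
  have h2 : e 2 = e (1 : Fin 3).succ := rfl
  have h3 : e 3 = e (2 : Fin 3).succ := rfl
  simp only [fueterMap, LinearMap.coe_mk, AddHom.coe_mk, smul_apply, op_smul_eq_mul,
    smul_eq_mul, zCLM_apply]
  rw [z_one, h1, h2, h3, z_e_succ, z_e_succ, z_e_succ]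
  fin_cases i <;> simp <;> noncomm_ring

theorem CRl_zProd (w : List (Fin 3)) (q : Hq) :
    CRl (zProd w) q = (1 / 2 : ℝ) • ∑ k : Fin w.length,
      (zProd (w.take k) q * e w[k].succ - e w[k].succ * zProd (w.take k) q)
        * zProd (w.drop (k + 1)) q := by
  simp only [CRl_eq_fueterMap, (hasFDerivAt_zProd w q).fderiv, map_sum,
    fueterMap_smul_zCLM_op_smul]

-- The letters at positions `l` and `k` are passed separately as `i` and `m`, so that exchanging
-- them only affects the factor `eComm i m`.
def pairTerm (w : List (Fin 3)) (q : Hq) (l k : ℕ) (i m : Fin 3) : Hq :=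
  zProd (w.take l) q * eComm i m * zProd ((w.take k).drop (l + 1)) q * zProd (w.drop (k + 1)) q

theorem CRl_zProd_eq_sum_pairTerm (w : List (Fin 3)) (q : Hq) :
    CRl (zProd w) q = (q.re / 2) • ∑ k ∈ Finset.range w.length, ∑ l ∈ Finset.range k,
      pairTerm w q l k (w.getD l 0) (w.getD k 0) := by
  have hk (k : Fin w.length) :
      (zProd (w.take k) q * e w[k].succ - e w[k].succ * zProd (w.take k) q)
        * zProd (w.drop (k + 1)) q
      = q.re • ∑ l ∈ Finset.range k, pairTerm w q l k (w.getD l 0) (w.getD k 0) := by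
    have hlen : (w.take k).length = k := by simp
    rw [zProd_mul_e_sub_e_mul_zProd, smul_mul_assoc, Finset.sum_mul, Finset.sum_range]
    congr 1
    refine Fintype.sum_equiv (finCongr hlen) _ _ fun l => ?_
    have hl : (l : ℕ) < k := lt_of_lt_of_eq l.isLt hlen
    simp only [Fin.getElem_fin, finCongr_apply, Fin.val_cast]
    rw [pairTerm, List.take_take, min_eq_left hl.le, List.getElem_take,
      List.getD_eq_getElem _ _ (hl.trans k.isLt), List.getD_eq_getElem _ _ k.isLt]
  rw [CRl_zProd, Finset.sum_congr rfl fun k _ => hk k,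
    Fin.sum_univ_eq_sum_range
      (fun k => q.re • ∑ l ∈ Finset.range k, pairTerm w q l k (w.getD l 0) (w.getD k 0)),
    ← Finset.smul_sum, smul_smul, one_div_mul_eq_div]

theorem pairTerm_swap (w : List (Fin 3)) (q : Hq) (l k : ℕ) (i m : Fin 3) :
    pairTerm w q l k m i = -pairTerm w q l k i m := by
  simp only [pairTerm, eComm_swap i m, mul_neg, neg_mul]

theorem pairTerm_ofFn_comp_swap {n : ℕ} (f : Fin n → Fin 3) {a b : Fin n} (hab : a < b)
    (q : Hq) (i m : Fin 3) :
    pairTerm (List.ofFn (f ∘ Equiv.swap a b)) q a b i m = pairTerm (List.ofFn f) q a b i m := by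
  have hab' : (a : ℕ) < b := hab
  rw [List.ofFn_comp_swap, pairTerm, pairTerm, List.take_set_of_le hab'.le,
    List.take_set_of_le le_rfl, List.take_set_of_le le_rfl, List.take_set,
    List.drop_set_of_lt (Nat.lt_succ_self _), List.drop_set_of_lt (Nat.lt_succ_self _),
    List.drop_set_of_lt (Nat.lt_succ_of_lt hab')]

theorem sum_pairTerm_eq_zero {n : ℕ} (S : Finset (Fin n → Fin 3))
    (hS : ∀ f ∈ S, ∀ a b : Fin n, f ∘ Equiv.swap a b ∈ S) (q : Hq) {l k : ℕ} (hlk : l < k)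
    (hk : k < n) :
    ∑ f ∈ S, pairTerm (List.ofFn f) q l k ((List.ofFn f).getD l 0) ((List.ofFn f).getD k 0) = 0 := by
  obtain ⟨a, rfl⟩ : ∃ a : Fin n, (a : ℕ) = l := ⟨⟨l, hlk.trans hk⟩, rfl⟩
  obtain ⟨b, rfl⟩ : ∃ b : Fin n, (b : ℕ) = k := ⟨⟨k, hk⟩, rfl⟩
  have hgetD (f : Fin n → Fin 3) (c : Fin n) : (List.ofFn f).getD c 0 = f c := by
    rw [List.getD_eq_getElem _ _ (by simp), List.getElem_ofFn]
  simp only [hgetD]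
  refine Finset.sum_eq_zero_of_involution_neg (· ∘ Equiv.swap a b) (fun f hf => hS f hf a b)
    (fun f _ => by ext; simp) fun f _ => ?_
  simp only [Function.comp_apply, Equiv.swap_apply_left, Equiv.swap_apply_right]
  rw [pairTerm_ofFn_comp_swap f hlk, pairTerm_swap]

theorem CRl_Pp (ν : Fin 3 → ℕ) (q : Hq) : CRl (Pp ν) q = 0 := by
  set S := Finset.univ.filter fun f : Fin (msum ν) → Fin 3 =>
    ∀ j, (Finset.univ.filter fun i => f i = j).card = ν j
  have hS (f) (hf : f ∈ S) (a b : Fin (msum ν)) : f ∘ Equiv.swap a b ∈ S := by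
    simpa [S, Finset.card_filter_comp_perm] using hf
  have hPp : Pp ν = fun x => ((msum ν).factorial : ℝ)⁻¹ • ∑ f ∈ S, zProd (List.ofFn f) x := rfl
  rw [hPp, CRl_const_smul_sum _ _ _ _ fun f _ => (hasFDerivAt_zProd _ q).differentiableAt]
  simp only [CRl_zProd_eq_sum_pairTerm, List.length_ofFn, ← Finset.smul_sum]
  rw [Finset.sum_comm, Finset.sum_eq_zero fun k hk => ?_, smul_zero, smul_zero]
  rw [Finset.sum_comm]
  exact Finset.sum_eq_zero fun l hl =>
    sum_pairTerm_eq_zero S hS q (Finset.mem_range.mp hl) (Finset.mem_range.mp hk)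

/-- For any choice of indices `i₁,…,i_n ∈ {1,2,3}`, the symmetrized product `P_ν`
with `ν` the content of `(i₁,…,i_n)` is left-regular; consequently every `P_ν`
(`ν ∈ ℕ³`) is left-regular on all of `ℍ`. -/
theorem Pp_left_regular :
    (∀ (n : ℕ) (t : Fin n → Fin 3) (q : Hq),
      CRl (Pp (fun j => (Finset.univ.filter fun i => t i = j).card)) q = 0) ∧
    (∀ (ν : Fin 3 → ℕ) (q : Hq), CRl (Pp ν) q = 0) :=
  ⟨fun _ _ => CRl_Pp _, CRl_Pp⟩
end
end

section
/- If g is right-regular and f is left-regular on an open set U ⊆ ℍ, then the ℍ-valued 3-form g · Dq · f is closed: d(g Dq f) = 0. -/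
/-!
Since `Dq` has constant coefficients, the Leibniz rule gives
`d(g Dq f) = dg ∧ Dq · f + g · Dq ∧ df`. Expanding `dg` and `df` in the coordinate differentials
and using `dx_a ∧ Dq = e_a · dt∧dx₁∧dx₂∧dx₃` (a cofactor expansion), this becomes
`2 (∂̄_r g · f + g · ∂̄_l f) dt∧dx₁∧dx₂∧dx₃`, which vanishes for `g` right- and `f` left-regular.
-/


open Quaternion

noncomputable section

/-- The elementary real 3-form `dx_a ∧ dx_b ∧ dx_c` evaluated on three tangent vectors. -/
def w3 (a b c : Fin 4) (v : Fin 3 → Hq) : ℝ :=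
  Matrix.det (Matrix.of fun i j => coord (v i) (![a, b, c] j))

/-- The canonical quaternionic 3-form
`Dq = dx₁∧dx₂∧dx₃ - i dt∧dx₂∧dx₃ + j dt∧dx₁∧dx₃ - k dt∧dx₁∧dx₂`
(coordinates `x₀ = t, x₁, x₂, x₃`), evaluated on tangent vectors. -/
def Dq3 (v : Fin 3 → Hq) : Hq :=
  w3 1 2 3 v • (1 : Hq) - w3 0 2 3 v • e 1 + w3 0 1 3 v • e 2 - w3 0 1 2 v • e 3

/-- Wedge product of an `ℍ`-valued 3-form with an `ℍ`-valued 1-form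
(quaternion coefficients multiplied in order, shuffle convention). -/
def wedge31 (ω : (Fin 3 → Hq) → Hq) (θ : Hq → Hq) (v : Fin 4 → Hq) : Hq :=
  ∑ i : Fin 4, ((-1 : ℝ) ^ ((i : ℕ) + 1)) • (ω (fun j => v (i.succAbove j)) * θ (v i))

/-- Exterior derivative of an `ℍ`-valued 3-form on `ℍ ≅ ℝ⁴`. -/
def extDer3 (ω : Hq → (Fin 3 → Hq) → Hq) (q : Hq) (v : Fin 4 → Hq) : Hq :=
  ∑ i : Fin 4, ((-1 : ℝ) ^ (i : ℕ)) •
    fderiv ℝ (fun p => ω p (fun j => v (i.succAbove j))) q (v i)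

lemma fderiv_mul_const_mul_apply {E 𝔸 : Type*} [NormedAddCommGroup E] [NormedSpace ℝ E]
    [NormedRing 𝔸] [NormedAlgebra ℝ 𝔸] {f g : E → 𝔸} {q : E}
    (hf : DifferentiableAt ℝ f q) (hg : DifferentiableAt ℝ g q) (C : 𝔸) (w : E) :
    fderiv ℝ (fun p => g p * C * f p) q w =
      fderiv ℝ g q w * C * f q + g q * C * fderiv ℝ f q w := by
  rw [fderiv_fun_mul' (hg.mul_const C) hf, fderiv_mul_const' hg]
  simp [add_comm]

lemma sum_coord_smul_e (q : Hq) : ∑ a : Fin 4, coord q a • e a = q := by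
  ext <;> simp [Fin.sum_univ_four, coord] <;> simp [e]

lemma LinearMap.apply_eq_sum_coord_smul {M : Type*} [AddCommGroup M] [Module ℝ M]
    (L : Hq →ₗ[ℝ] M) (w : Hq) : L w = ∑ a : Fin 4, coord w a • L (e a) := by
  conv_lhs => rw [← sum_coord_smul_e w]
  simp [map_sum]

lemma CRl_eq_smul_sum (f : Hq → Hq) (q : Hq) :
    CRl f q = (1/2 : ℝ) • ∑ a : Fin 4, e a * fderiv ℝ f q (e a) := by
  simp [CRl, Fin.sum_univ_four, show e 0 = 1 from rfl]

lemma CRr_eq_smul_sum (g : Hq → Hq) (q : Hq) :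
    CRr g q = (1/2 : ℝ) • ∑ a : Fin 4, fderiv ℝ g q (e a) * e a := by
  simp [CRr, Fin.sum_univ_four, show e 0 = 1 from rfl]

/-- Row `i` holds the coordinates of `v i`; for `n = 4` the determinant is
`(dt∧dx₁∧dx₂∧dx₃)(v)`. -/
def coordMatrix {n : ℕ} (v : Fin n → Hq) : Matrix (Fin n) (Fin 4) ℝ :=
  Matrix.of fun i a => coord (v i) a

lemma Dq3_eq_sum_minor (w : Fin 3 → Hq) :
    Dq3 w = ∑ b : Fin 4,
      ((-1 : ℝ) ^ (b : ℕ) * ((coordMatrix w).submatrix id b.succAbove).det) • e b := by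
  have h0 : (0 : Fin 4).succAbove = ![1, 2, 3] := by decide
  have h1 : (1 : Fin 4).succAbove = ![0, 2, 3] := by decide
  have h2 : (2 : Fin 4).succAbove = ![0, 1, 3] := by decide
  have h3 : (3 : Fin 4).succAbove = ![0, 1, 2] := by decide
  simp only [Fin.sum_univ_four, h0, h1, h2, h3]
  simp [Dq3, w3, coordMatrix, Matrix.submatrix, sub_eq_add_neg, show e 0 = 1 from rfl, pow_succ]

/-- This is `dx_a ∧ Dq = e_a · dt∧dx₁∧dx₂∧dx₃`. The coefficient of `e_b` is the cofactor expansion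
along column `b` of the coordinate matrix with its column `b` replaced by column `a`. -/
lemma sum_alternating_coord_smul_Dq3 (v : Fin 4 → Hq) (a : Fin 4) :
    ∑ i : Fin 4, ((-1 : ℝ) ^ (i : ℕ) * coord (v i) a) • Dq3 (fun j => v (i.succAbove j)) =
      (coordMatrix v).det • e a := by
  set M := coordMatrix v
  have hcofactor : ∀ b : Fin 4, ∑ i : Fin 4, ((-1 : ℝ) ^ (i : ℕ) * coord (v i) a) *
      ((-1 : ℝ) ^ (b : ℕ) *
        ((coordMatrix fun j => v (i.succAbove j)).submatrix id b.succAbove).det) =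
      (M.updateCol b fun i => M i a).det := by
    intro b
    rw [Matrix.det_succ_column _ b]
    refine Finset.sum_congr rfl fun i _ => ?_
    have hminor : (coordMatrix fun j => v (i.succAbove j)).submatrix id b.succAbove =
        M.submatrix i.succAbove b.succAbove := rfl
    rw [hminor, Matrix.submatrix_updateCol_succAbove, Matrix.updateCol_self, pow_add]
    simp only [M, coordMatrix, Matrix.of_apply]
    ring
  have hdet : ∀ b : Fin 4, (M.updateCol b fun i => M i a).det = if a = b then M.det else 0 := by
    intro b
    split_ifs with hab
    · subst hab
      exact congrArg Matrix.det (Matrix.updateCol_eq_self M a)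
    · exact Matrix.det_zero_of_column_eq hab (fun i => by simp [Matrix.updateCol_ne hab])
  simp_rw [Dq3_eq_sum_minor, Finset.smul_sum, smul_smul]
  rw [Finset.sum_comm]
  simp_rw [← Finset.sum_smul, hcofactor, hdet, ite_smul, zero_smul, Finset.sum_ite_eq,
    Finset.mem_univ, if_true]

lemma sum_alternating_mul_Dq3 (L : Hq →ₗ[ℝ] Hq) (v : Fin 4 → Hq) :
    ∑ i : Fin 4, (-1 : ℝ) ^ (i : ℕ) • (L (v i) * Dq3 fun j => v (i.succAbove j)) =
      (coordMatrix v).det • ∑ a : Fin 4, L (e a) * e a := by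
  have hL : ∀ i, L (v i) = ∑ a : Fin 4, coord (v i) a • L (e a) :=
    fun i => L.apply_eq_sum_coord_smul (v i)
  simp_rw [Finset.smul_sum, ← mul_smul_comm, ← sum_alternating_coord_smul_Dq3, Finset.mul_sum,
    hL, Finset.sum_mul]
  rw [Finset.sum_comm]
  simp only [smul_mul_assoc, mul_smul_comm, smul_smul, mul_comm]

lemma sum_alternating_Dq3_mul (L : Hq →ₗ[ℝ] Hq) (v : Fin 4 → Hq) :
    ∑ i : Fin 4, (-1 : ℝ) ^ (i : ℕ) • ((Dq3 fun j => v (i.succAbove j)) * L (v i)) =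
      (coordMatrix v).det • ∑ a : Fin 4, e a * L (e a) := by
  have hL : ∀ i, L (v i) = ∑ a : Fin 4, coord (v i) a • L (e a) :=
    fun i => L.apply_eq_sum_coord_smul (v i)
  simp_rw [Finset.smul_sum, ← smul_mul_assoc, ← sum_alternating_coord_smul_Dq3, Finset.sum_mul,
    hL, Finset.mul_sum]
  rw [Finset.sum_comm]
  simp only [smul_mul_assoc, mul_smul_comm, smul_smul, mul_comm]

theorem extDer3_mul_Dq3_mul {f g : Hq → Hq} {q : Hq} (hf : DifferentiableAt ℝ f q)
    (hg : DifferentiableAt ℝ g q) (v : Fin 4 → Hq) :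
    extDer3 (fun p w => g p * Dq3 w * f p) q v =
      (2 * (coordMatrix v).det) • (CRr g q * f q + g q * CRl f q) := by
  have hsplit : extDer3 (fun p w => g p * Dq3 w * f p) q v =
      (∑ i : Fin 4, (-1 : ℝ) ^ (i : ℕ) •
          (fderiv ℝ g q (v i) * Dq3 fun j => v (i.succAbove j))) * f q +
        g q * ∑ i : Fin 4, (-1 : ℝ) ^ (i : ℕ) •
          ((Dq3 fun j => v (i.succAbove j)) * fderiv ℝ f q (v i)) := by
    simp only [extDer3, fderiv_mul_const_mul_apply hf hg]
    simp only [Finset.sum_mul, Finset.mul_sum, ← Finset.sum_add_distrib, smul_add, smul_mul_assoc,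
      mul_smul_comm, mul_assoc]
  have hg' := sum_alternating_mul_Dq3 (fderiv ℝ g q).toLinearMap v
  have hf' := sum_alternating_Dq3_mul (fderiv ℝ f q).toLinearMap v
  simp only [ContinuousLinearMap.coe_coe] at hg' hf'
  rw [hsplit, hg', hf', CRr_eq_smul_sum, CRl_eq_smul_sum]
  simp only [smul_mul_assoc, mul_smul_comm, smul_add, smul_smul]
  rw [show (2 * (coordMatrix v).det * (1 / 2) : ℝ) = (coordMatrix v).det by ring]

theorem gDqf_closed_general (U : Set Hq) (f g : Hq → Hq)
    (hf : ∀ q ∈ U, DifferentiableAt ℝ f q) (hg : ∀ q ∈ U, DifferentiableAt ℝ g q)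
    (hfreg : ∀ q ∈ U, CRl f q = 0) (hgreg : ∀ q ∈ U, CRr g q = 0) :
    ∀ q ∈ U, ∀ v : Fin 4 → Hq,
      extDer3 (fun p w => g p * Dq3 w * f p) q v = 0 := by
  intro q hq v
  rw [extDer3_mul_Dq3_mul (hf q hq) (hg q hq), hgreg q hq, hfreg q hq]
  simp

/-- If `g` is right-regular and `f` is left-regular on an open `U ⊆ ℍ`, then the
`ℍ`-valued 3-form `g · Dq · f` is closed: `d(g Dq f) = 0` on `U`. -/
theorem gDqf_closed (U : Set Hq) (hU : IsOpen U) (f g : Hq → Hq)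
    (hf : ∀ q ∈ U, DifferentiableAt ℝ f q) (hg : ∀ q ∈ U, DifferentiableAt ℝ g q)
    (hfreg : ∀ q ∈ U, CRl f q = 0) (hgreg : ∀ q ∈ U, CRr g q = 0) :
    ∀ q ∈ U, ∀ v : Fin 4 → Hq,
      extDer3 (fun p w => g p * Dq3 w * f p) q v = 0 :=
  gDqf_closed_general U f g hf hg hfreg hgreg
end
end

section
/- Let f: ℍ∖L → ℍ be left-regular and quasi-periodic with respect to a full lattice L with basis λ₁,…,λ₄ (i.e., f(q+λ_h) = f(q) + η_h for constants η_h), with poles only on L. For a ∈ ℍ^× with a^{−1}L ⊇ L, define f_a(q) = f(aq)·a. Then f_a is left-regular on ℍ∖a^{−1}L, quasi-periodic with respect to L with quasi-period vector P(df_a) = U_a · η · a (where η = ᵗ(η₁,…,η₄) and aλ = U_a λ), and res₀(f_a) = G(a)·res₀(f)·a where G(a) = a^{−1}/N(a). -/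
open Quaternion

noncomputable section

/-- The Cauchy–Fueter kernel `G(q) = q⁻¹ / N(q)`. -/
def G (q : Hq) : Hq := (Quaternion.normSq q : ℝ)⁻¹ • q⁻¹

/-! Regularity is the chain rule: the Fueter sum of `T ∘ (a * ·)` is `star a` times the Fueter
sum of `T`, so `∂̄_l f_a (q) = ā · ∂̄_l f (aq) · a`. Quasi-periodicity: the pairs `(x, y)` with
`x ∈ L` and `f (p + x) = f p + y` off `L` form an additive subgroup, which contains every
`(λ_h, η_h)` and hence every integer combination; apply it to `a λ_h = ∑ U_{hk} λ_k`. The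
residue follows from `G (a q) = G q * G a`. -/

lemma LinearMap.apply_eq_quaternion_coords (T : Hq →ₗ[ℝ] Hq) (x : Hq) :
    T x = x.re • T 1 + x.imI • T (e 1) + x.imJ • T (e 2) + x.imK • T (e 3) := by
  have hx : x = x.re • (1 : Hq) + x.imI • e 1 + x.imJ • e 2 + x.imK • e 3 := by
    ext <;> simp [Quaternion.re_smul] <;> simp [e]
  conv_lhs => rw [hx]
  simp only [map_add, map_smul]

def fueterSum (T : Hq →ₗ[ℝ] Hq) : Hq := T 1 + e 1 * T (e 1) + e 2 * T (e 2) + e 3 * T (e 3)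

lemma CRl_eq_fueterSum (f : Hq → Hq) (q : Hq) :
    CRl f q = (1 / 2 : ℝ) • fueterSum (fderiv ℝ f q) :=
  rfl

lemma fueterSum_comp_mulLeft (T : Hq →ₗ[ℝ] Hq) (a : Hq) :
    fueterSum (T ∘ₗ LinearMap.mulLeft ℝ a) = star a * fueterSum T := by
  simp only [fueterSum, LinearMap.comp_apply, LinearMap.mulLeft_apply]
  rw [T.apply_eq_quaternion_coords (a * 1), T.apply_eq_quaternion_coords (a * e 1),
    T.apply_eq_quaternion_coords (a * e 2), T.apply_eq_quaternion_coords (a * e 3)]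
  ext <;> simp [Quaternion.re_mul, Quaternion.imI_mul, Quaternion.imJ_mul,
    Quaternion.imK_mul] <;> simp [e] <;> ring

lemma fueterSum_mulRight_comp (T : Hq →ₗ[ℝ] Hq) (b : Hq) :
    fueterSum (LinearMap.mulRight ℝ b ∘ₗ T) = fueterSum T * b := by
  simp only [fueterSum, LinearMap.comp_apply, LinearMap.mulRight_apply, mul_assoc, add_mul]

lemma CRl_comp_mul_left_mul_right (f : Hq → Hq) (a b q : Hq)
    (hf : DifferentiableAt ℝ f (a * q)) :
    CRl (fun p => f (a * p) * b) q = star a * CRl f (a * q) * b := by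
  have hcomp : HasFDerivAt (fun p => f (a * p) * b)
      (((fderiv ℝ f (a * q)).comp (ContinuousLinearMap.mul ℝ Hq a)).smulRight b) q :=
    (hf.hasFDerivAt.comp q (ContinuousLinearMap.mul ℝ Hq a).hasFDerivAt).mul_const' b
  have hlin : (((fderiv ℝ f (a * q)).comp (ContinuousLinearMap.mul ℝ Hq a)).smulRight b
      : Hq →ₗ[ℝ] Hq) = LinearMap.mulRight ℝ b ∘ₗ (fderiv ℝ f (a * q) ∘ₗ LinearMap.mulLeft ℝ a) :=
    LinearMap.ext fun v => by simp
  rw [CRl_eq_fueterSum, CRl_eq_fueterSum, hcomp.fderiv, hlin, fueterSum_mulRight_comp,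
    fueterSum_comp_mulLeft, mul_smul_comm, smul_mul_assoc]

section QuasiPeriodic

variable {V W : Type*} [AddCommGroup V] [AddCommGroup W] (Λ : AddSubgroup V) (f : V → W)

def quasiPeriodPairs : AddSubgroup (V × W) where
  carrier := {xy | xy.1 ∈ Λ ∧ ∀ p ∉ Λ, f (p + xy.1) = f p + xy.2}
  zero_mem' := ⟨Λ.zero_mem, fun p _ => by simp⟩
  add_mem' := by
    rintro ⟨x, y⟩ ⟨x', y'⟩ ⟨hx, hfx⟩ ⟨hx', hfx'⟩
    refine ⟨Λ.add_mem hx hx', fun p hp => ?_⟩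
    have hpx : p + x ∉ Λ := fun h => hp (by simpa using Λ.sub_mem h hx)
    simp only [Prod.fst_add, Prod.snd_add, ← add_assoc, hfx' _ hpx, hfx p hp]
  neg_mem' := by
    rintro ⟨x, y⟩ ⟨hx, hfx⟩
    refine ⟨Λ.neg_mem hx, fun p hp => ?_⟩
    have hpx : p - x ∉ Λ := fun h => hp (by simpa using Λ.add_mem h hx)
    have hfp := hfx _ hpx
    simp only [sub_add_cancel] at hfp
    simp only [Prod.fst_neg, Prod.snd_neg, ← sub_eq_add_neg]
    rw [hfp, add_sub_cancel_right]

lemma mem_quasiPeriodPairs {xy : V × W} :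
    xy ∈ quasiPeriodPairs Λ f ↔ xy.1 ∈ Λ ∧ ∀ p ∉ Λ, f (p + xy.1) = f p + xy.2 :=
  Iff.rfl

lemma map_add_sum_zsmul {ι : Type*} [Fintype ι] (lam : ι → V) (η : ι → W)
    (hlam : ∀ h, lam h ∈ Λ) (hqp : ∀ p ∉ Λ, ∀ h, f (p + lam h) = f p + η h)
    (c : ι → ℤ) {p : V} (hp : p ∉ Λ) :
    f (p + ∑ h, c h • lam h) = f p + ∑ h, c h • η h := by
  have hmem : ∑ h, c h • (lam h, η h) ∈ quasiPeriodPairs Λ f :=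
    AddSubgroup.sum_mem _ fun h _ =>
      AddSubgroup.zsmul_mem _ ((mem_quasiPeriodPairs Λ f).2 ⟨hlam h, fun p hp => hqp p hp h⟩) _
  simpa [Prod.fst_sum, Prod.snd_sum] using ((mem_quasiPeriodPairs Λ f).1 hmem).2 p hp

end QuasiPeriodic

lemma setOf_intCombination_eq_span {V ι : Type*} [AddCommGroup V] [Module ℝ V] [Fintype ι]
    (lam : ι → V) :
    {x : V | ∃ c : ι → ℤ, x = ∑ h, ((c h : ℤ) : ℝ) • lam h}
      = Submodule.span ℤ (Set.range lam) := by
  ext x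
  simp only [Set.mem_ofPred_eq, SetLike.mem_coe, Submodule.mem_span_range_iff_exists_fun,
    Int.cast_smul_eq_zsmul, eq_comm]

lemma G_mul (a q : Hq) : G (a * q) = G q * G a := by
  simp only [G, map_mul, mul_inv_rev]
  rw [smul_mul_assoc, mul_smul_comm, smul_smul]

lemma tendsto_mul_left_punctured {a : Hq} (ha : a ≠ 0) :
    Filter.Tendsto (a * ·) (nhdsWithin 0 {0}ᶜ) (nhdsWithin 0 {0}ᶜ) := by
  simpa using ((continuous_const_mul a).continuousWithinAt (x := 0)).tendsto_nhdsWithin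
    (s := {(0 : Hq)}ᶜ) (t := {0}ᶜ) fun q hq => mul_ne_zero ha hq

lemma principalPart_comp_mul_left_mul_right (f f₀ : Hq → Hq) (a b r : Hq) (ha : a ≠ 0)
    (hf₀ : DifferentiableAt ℝ f₀ 0)
    (hf : ∀ᶠ q in nhdsWithin (0 : Hq) {(0 : Hq)}ᶜ, f q = G q * r + f₀ q) :
    ∃ g₀ : Hq → Hq, DifferentiableAt ℝ g₀ 0 ∧
      ∀ᶠ q in nhdsWithin (0 : Hq) {(0 : Hq)}ᶜ,
        f (a * q) * b = G q * (G a * r * b) + g₀ q := by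
  refine ⟨fun q => f₀ (a * q) * b, ?_, ?_⟩
  · have hf₀' : DifferentiableAt ℝ f₀ (a * 0) := by rwa [mul_zero]
    exact (hf₀'.comp 0 (ContinuousLinearMap.mul ℝ Hq a).differentiableAt).mul_const b
  · filter_upwards [(tendsto_mul_left_punctured ha).eventually hf] with q hq
    rw [hq, G_mul, add_mul]
    simp only [mul_assoc]

theorem f_a_properties_general (lam : Fin 4 → Hq)
    (L : Set Hq)
    (hLdef : L = {x : Hq | ∃ c : Fin 4 → ℤ, x = ∑ h : Fin 4, ((c h : ℤ) : ℝ) • lam h})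
    (f : Hq → Hq) (η : Fin 4 → Hq)
    (hdiff : ∀ q ∉ L, DifferentiableAt ℝ f q)
    (hreg : ∀ q ∉ L, CRl f q = 0)
    (hqp : ∀ q ∉ L, ∀ h : Fin 4, f (q + lam h) = f q + η h)
    (a : Hq) (ha : a ≠ 0)
    (Ua : Matrix (Fin 4) (Fin 4) ℤ)
    (hUa : ∀ h : Fin 4, a * lam h = ∑ k : Fin 4, ((Ua h k : ℤ) : ℝ) • lam k)
    (r : Hq)
    (hres : ∃ f₀ : Hq → Hq, DifferentiableAt ℝ f₀ 0 ∧
      ∀ᶠ q in nhdsWithin (0 : Hq) {(0 : Hq)}ᶜ, f q = G q * r + f₀ q) :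
    (∀ q : Hq, a * q ∉ L → CRl (fun p => f (a * p) * a) q = 0) ∧
    (∀ q : Hq, a * q ∉ L → ∀ h : Fin 4,
      f (a * (q + lam h)) * a = f (a * q) * a + ∑ k : Fin 4, ((Ua h k : ℤ) : ℝ) • (η k * a)) ∧
    (∃ g₀ : Hq → Hq, DifferentiableAt ℝ g₀ 0 ∧
      ∀ᶠ q in nhdsWithin (0 : Hq) {(0 : Hq)}ᶜ,
        f (a * q) * a = G q * (G a * r * a) + g₀ q) := by
  rw [setOf_intCombination_eq_span] at hLdef
  subst hLdef
  refine ⟨fun q hq => ?_, fun q hq h => ?_, ?_⟩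
  · rw [CRl_comp_mul_left_mul_right f a a q (hdiff _ hq), hreg _ hq, mul_zero, zero_mul]
  · have hlam : ∀ k, lam k ∈ (Submodule.span ℤ (Set.range lam)).toAddSubgroup :=
      fun k => Submodule.subset_span ⟨k, rfl⟩
    simp only [Int.cast_smul_eq_zsmul] at hUa ⊢
    rw [mul_add, hUa, map_add_sum_zsmul _ f lam η hlam hqp (Ua h) hq, add_mul, Finset.sum_mul]
    simp only [smul_mul_assoc]
  · obtain ⟨f₀, hf₀, hf⟩ := hres
    exact principalPart_comp_mul_left_mul_right f f₀ a a r ha hf₀ hf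

/-- Let `f` be left-regular and quasi-periodic with respect to the full lattice `L`
spanned by `λ₁,…,λ₄`, with poles only on `L` and residue data `f = G·r + (regular)` at `0`.
For `a ≠ 0` with `a⁻¹L ⊇ L` (i.e. `aL ⊆ L`), the function `f_a(q) = f(aq)·a` is
left-regular on `ℍ ∖ a⁻¹L`, quasi-periodic with respect to `L` with quasi-period vector
`U_a·η·a`, and `res₀(f_a) = G(a)·res₀(f)·a`. -/
theorem f_a_properties (lam : Fin 4 → Hq) (hlam : LinearIndependent ℝ lam)
    (L : Set Hq)
    (hLdef : L = {x : Hq | ∃ c : Fin 4 → ℤ, x = ∑ h : Fin 4, ((c h : ℤ) : ℝ) • lam h})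
    (f : Hq → Hq) (η : Fin 4 → Hq)
    (hdiff : ∀ q ∉ L, DifferentiableAt ℝ f q)
    (hreg : ∀ q ∉ L, CRl f q = 0)
    (hqp : ∀ q ∉ L, ∀ h : Fin 4, f (q + lam h) = f q + η h)
    (a : Hq) (ha : a ≠ 0) (haL : ∀ x ∈ L, a * x ∈ L)
    (Ua : Matrix (Fin 4) (Fin 4) ℤ)
    (hUa : ∀ h : Fin 4, a * lam h = ∑ k : Fin 4, ((Ua h k : ℤ) : ℝ) • lam k)
    (r : Hq)
    (hres : ∃ f₀ : Hq → Hq, DifferentiableAt ℝ f₀ 0 ∧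
      ∀ᶠ q in nhdsWithin (0 : Hq) {(0 : Hq)}ᶜ, f q = G q * r + f₀ q) :
    (∀ q : Hq, a * q ∉ L → CRl (fun p => f (a * p) * a) q = 0) ∧
    (∀ q : Hq, a * q ∉ L → ∀ h : Fin 4,
      f (a * (q + lam h)) * a = f (a * q) * a + ∑ k : Fin 4, ((Ua h k : ℤ) : ℝ) • (η k * a)) ∧
    (∃ g₀ : Hq → Hq, DifferentiableAt ℝ g₀ 0 ∧
      ∀ᶠ q in nhdsWithin (0 : Hq) {(0 : Hq)}ᶜ,
        f (a * q) * a = G q * (G a * r * a) + g₀ q) :=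
  f_a_properties_general lam L hLdef f η hdiff hreg hqp a ha Ua hUa r hres
end
end
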